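/- The Lie bracket of two temporal adapted vector fields is vertical: [δ/δt^α, δ/δt^β] = R^{(m)}_{(μ)αβ} ∂/∂x^m_μ, where R^{(m)}_{(μ)αβ} = δM^{(m)}_{(μ)α}/δt^β − δM^{(m)}_{(μ)β}/δt^α. -/

import Mathlib

open scoped BigOperators

/-- The local model of the 1-jet space `J¹(T,M)`: coordinates `(t^α, x^i, x^i_α)`. -/
abbrev Jet (p n : ℕ) : Type :=
  (Fin p → ℝ) × (Fin n → ℝ) × (Fin n → Fin p → ℝ)

/-- The coordinate tangent vector `∂/∂t^α`. -/
noncomputable def evt (p n : ℕ) (α : Fin p) : Jet p n := (Pi.single α 1, 0, 0)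

/-- The coordinate tangent vector `∂/∂x^i`. -/
noncomputable def evx (p n : ℕ) (i : Fin n) : Jet p n := (0, Pi.single i 1, 0)

/-- The coordinate tangent vector `∂/∂x^i_α`. -/
noncomputable def evv (p n : ℕ) (i : Fin n) (α : Fin p) : Jet p n :=
  (0, 0, Pi.single i (Pi.single α 1))

/-- The adapted vector field `δ/δt^α = ∂/∂t^α - M^{(j)}_{(β)α} ∂/∂x^j_β`.
`M j β α` denotes `M^{(j)}_{(β)α}`. -/
noncomputable def deltaT {p n : ℕ} (M : Fin n → Fin p → Fin p → Jet p n → ℝ)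
    (α : Fin p) (z : Jet p n) : Jet p n :=
  (Pi.single α 1, 0, fun j β => -(M j β α z))

/-- The adapted vector field `δ/δx^i = ∂/∂x^i - N^{(j)}_{(β)i} ∂/∂x^j_β`.
`N j β i` denotes `N^{(j)}_{(β)i}`. -/
noncomputable def deltaX {p n : ℕ} (N : Fin n → Fin p → Fin n → Jet p n → ℝ)
    (i : Fin n) (z : Jet p n) : Jet p n :=
  (0, Pi.single i 1, fun j β => -(N j β i z))

/-- Lie bracket of vector fields on the jet space (in coordinates). -/
noncomputable def lieB {p n : ℕ} (X Y : Jet p n → Jet p n) (z : Jet p n) : Jet p n :=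
  fderiv ℝ Y z (X z) - fderiv ℝ X z (Y z)

/-- The adapted vertical component `δx^i_α(v) = v^i_α + M^{(i)}_{(α)β} v^β + N^{(i)}_{(α)j} v^j`
of a tangent vector `v` at `z`. -/
def vcomp {p n : ℕ} (M : Fin n → Fin p → Fin p → Jet p n → ℝ)
    (N : Fin n → Fin p → Fin n → Jet p n → ℝ) (z v : Jet p n)
    (i : Fin n) (α : Fin p) : ℝ :=
  v.2.2 i α + ∑ β, M i α β z * v.1 β + ∑ j, N i α j z * v.2.1 j

/-- The Lie bracket of two temporal adapted vector fields is vertical: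
`[δ/δt^α, δ/δt^β] = R^{(m)}_{(μ)αβ} ∂/∂x^m_μ`, where
`R^{(m)}_{(μ)αβ} = δM^{(m)}_{(μ)α}/δt^β − δM^{(m)}_{(μ)β}/δt^α`. -/
theorem temporal_adapted_bracket (p n : ℕ)
    (M : Fin n → Fin p → Fin p → Jet p n → ℝ)
    (hM : ∀ j β α, ContDiff ℝ (⊤ : ℕ∞) (M j β α))
    (α β : Fin p) (z : Jet p n) :
    lieB (deltaT M α) (deltaT M β) z =
      (0, 0, fun m μ =>
        fderiv ℝ (M m μ α) z (deltaT M β z) - fderiv ℝ (M m μ β) z (deltaT M α z)) := by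
  have h : ∀ γ : Fin p, HasFDerivAt (deltaT M γ)
      ((0 : Jet p n →L[ℝ] Fin p → ℝ).prod
        ((0 : Jet p n →L[ℝ] Fin n → ℝ).prod
          (ContinuousLinearMap.pi fun j => ContinuousLinearMap.pi fun δ =>
            -(fderiv ℝ (M j δ γ) z)))) z := by
    intro γ
    exact HasFDerivAt.prodMk (hasFDerivAt_const _ _) (HasFDerivAt.prodMk (hasFDerivAt_const _ _)
      (hasFDerivAt_pi.2 fun j => hasFDerivAt_pi.2 fun δ =>
        ((hM j δ γ).differentiable (by simp) z).hasFDerivAt.neg))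
  unfold lieB
  rw [(h α).fderiv, (h β).fderiv]
  simp only [ContinuousLinearMap.prod_apply, ContinuousLinearMap.zero_apply,
    ContinuousLinearMap.pi_apply, ContinuousLinearMap.neg_apply,
    Prod.mk_sub_mk, sub_zero, Pi.sub_apply]
  refine Prod.ext (by simp) (Prod.ext (by simp) ?_)
  funext m μ
  simp only [Pi.sub_apply, ContinuousLinearMap.pi_apply, ContinuousLinearMap.neg_apply]
  ring
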